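/- Let G be a closed, connected, self-adjoint, noncompact subgroup of GL(n,ℝ), and let v ∈ ℝⁿ be a nonzero minimal vector such that the orbit G(v) is unbounded. Then 0 < λ_X(v) ≤ 1 for every X ∈ 𝔓̃_v with |X| = 1. -/

import Mathlib

open Matrix Filter Topology

noncomputable section

/-- The space M(n,ℝ) of n × n real matrices. -/
abbrev Mat (n : ℕ) := Matrix (Fin n) (Fin n) ℝ

/-- ℝⁿ with its standard (Euclidean) inner product. -/
abbrev Euc (n : ℕ) := EuclideanSpace ℝ (Fin n)

/-- The action of a matrix on Euclidean space. -/
def act {n : ℕ} (X : Mat n) (v : Euc n) : Euc n := Matrix.toEuclideanLin X v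

/-- The matrix exponential. -/
def mexp {n : ℕ} (X : Mat n) : Mat n := NormedSpace.exp X

/-- The canonical inner product ⟨A,B⟩ = trace (A Bᵀ) on M(n,ℝ). -/
def minner {n : ℕ} (A B : Mat n) : ℝ := Matrix.trace (A * Bᵀ)

/-- The norm associated to the canonical inner product on M(n,ℝ). -/
def mnorm {n : ℕ} (A : Mat n) : ℝ := Real.sqrt (minner A A)

/-- The Lie algebra 𝔊 of a subgroup G of GL(n,ℝ):
𝔊 = {X ∈ M(n,ℝ) : exp(tX) ∈ G for all t ∈ ℝ}. -/
def lieAlgOf {n : ℕ} (G : Subgroup (GL (Fin n) ℝ)) : Set (Mat n) :=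
  {X | ∀ t : ℝ, ∃ g ∈ G, (g : Mat n) = mexp (t • X)}

/-- G is self-adjoint: gᵀ ∈ G whenever g ∈ G. -/
def IsSelfAdjointSubgroup {n : ℕ} (G : Subgroup (GL (Fin n) ℝ)) : Prop :=
  ∀ g ∈ G, ∃ h ∈ G, (h : Mat n) = (g : Mat n)ᵀ

/-- 𝔎 : the set of skew-symmetric elements of the Lie algebra of G. -/
def kSet {n : ℕ} (G : Subgroup (GL (Fin n) ℝ)) : Set (Mat n) :=
  {X ∈ lieAlgOf G | Xᵀ = -X}

/-- 𝔊_v : the stabilizer subalgebra {X ∈ 𝔊 : X(v) = 0}. -/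
def stabAlg {n : ℕ} (G : Subgroup (GL (Fin n) ℝ)) (v : Euc n) : Set (Mat n) :=
  {X ∈ lieAlgOf G | act X v = 0}

/-- 𝔓̃_v : the orthogonal complement of 𝔎 + 𝔊_v in 𝔊 w.r.t. the canonical inner product. -/
def tildeP {n : ℕ} (G : Subgroup (GL (Fin n) ℝ)) (v : Euc n) : Set (Mat n) :=
  {X ∈ lieAlgOf G | ∀ Y : Mat n, (Y ∈ kSet G ∨ Y ∈ stabAlg G v) → minner X Y = 0}

/-- `v` has a nonzero component in the μ-eigenspace of X. -/
def hasComp {n : ℕ} (X : Mat n) (v : Euc n) (μ : ℝ) : Prop :=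
  Submodule.orthogonalProjectionOnto (Module.End.eigenspace (Matrix.toEuclideanLin X) μ) v ≠ 0

/-- λ_X(v) : the largest eigenvalue μ of X such that v has a nonzero component
in the μ-eigenspace of X. -/
def lambdaOf {n : ℕ} (X : Mat n) (v : Euc n) : ℝ := sSup {μ : ℝ | hasComp X v μ}

/-- μ_X(v) : the smallest eigenvalue μ of X such that v has a nonzero component
in the μ-eigenspace of X. -/
def muOf {n : ℕ} (X : Mat n) (v : Euc n) : ℝ := sInf {μ : ℝ | hasComp X v μ}

/-- λ⁻(v) = inf {λ_X(v) : X ∈ 𝔓̃_v, |X| = 1}. -/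
def lamMinus {n : ℕ} (G : Subgroup (GL (Fin n) ℝ)) (v : Euc n) : ℝ :=
  sInf {r : ℝ | ∃ X ∈ tildeP G v, mnorm X = 1 ∧ r = lambdaOf X v}

/-- λ⁺(v) = sup {λ_X(v) : X ∈ 𝔓̃_v, |X| = 1}. -/
def lamPlus {n : ℕ} (G : Subgroup (GL (Fin n) ℝ)) (v : Euc n) : ℝ :=
  sSup {r : ℝ | ∃ X ∈ tildeP G v, mnorm X = 1 ∧ r = lambdaOf X v}

/-- The orbit G(v). -/
def orbitOf {n : ℕ} (G : Subgroup (GL (Fin n) ℝ)) (v : Euc n) : Set (Euc n) :=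
  {w | ∃ g ∈ G, w = act (g : Mat n) v}

/-- v is a minimal vector for G : |g(v)| ≥ |v| for all g ∈ G. -/
def IsMinimalVec {n : ℕ} (G : Subgroup (GL (Fin n) ℝ)) (v : Euc n) : Prop :=
  ∀ g ∈ G, ‖v‖ ≤ ‖act (g : Mat n) v‖

/-!
An element `X ∈ 𝔓̃_v` is symmetric: `𝔊` is a linear subspace (Lie product formula and closedness
of `G`) stable under transposition (self-adjointness of `G`), so `X - Xᵀ ∈ 𝔎` and
`|X - Xᵀ|² = 2 ⟨X, X - Xᵀ⟩ = 0`. Every eigenvalue of `X` is bounded by `|X| = 1`, whence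
`λ_X(v) ≤ 1`. Write `v = ∑ cᵢ eᵢ` in an orthonormal eigenbasis, `X eᵢ = λᵢ eᵢ`. Minimality at
`exp X ∈ G` gives `∑ cᵢ² ≤ ∑ e^{2λᵢ} cᵢ²`; if `λᵢ ≤ 0` whenever `cᵢ ≠ 0`, this forces `λᵢ cᵢ = 0`
for all `i`, i.e. `X v = 0`, and then `X ∈ 𝔊_v` is orthogonal to itself.
-/

section LieProduct

variable {𝔸 : Type*} [NormedRing 𝔸]

theorem norm_pow_succ_sub_pow_succ_le {M : ℝ} {c d : 𝔸} (hc : ‖c‖ ≤ M) (hd : ‖d‖ ≤ M) (k : ℕ) :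
    ‖c ^ (k + 1) - d ^ (k + 1)‖ ≤ (k + 1) * M ^ k * ‖c - d‖ := by
  induction k with
  | zero => simp
  | succ k ih =>
    have hM : 0 ≤ M := (norm_nonneg c).trans hc
    have hdk : ‖d ^ (k + 1)‖ ≤ M ^ (k + 1) :=
      (norm_pow_le' d k.succ_pos).trans (pow_le_pow_left₀ (norm_nonneg d) hd _)
    calc ‖c ^ (k + 2) - d ^ (k + 2)‖
        = ‖c * (c ^ (k + 1) - d ^ (k + 1)) + (c - d) * d ^ (k + 1)‖ := by
          rw [pow_succ' c, pow_succ' d, mul_sub, sub_mul, sub_add_sub_cancel]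
      _ ≤ M * ((k + 1) * M ^ k * ‖c - d‖) + ‖c - d‖ * M ^ (k + 1) := by
          refine (norm_add_le _ _).trans (add_le_add ?_ ?_)
          · exact (norm_mul_le _ _).trans (mul_le_mul hc ih (norm_nonneg _) hM)
          · exact (norm_mul_le _ _).trans (mul_le_mul_of_nonneg_left hdk (norm_nonneg _))
      _ = ((k + 1 : ℕ) + 1) * M ^ (k + 1) * ‖c - d‖ := by push_cast; ring

variable [NormOneClass 𝔸] [NormedAlgebra ℝ 𝔸]

theorem eventually_norm_le_one_add_of_hasDerivAt {f : ℝ → 𝔸} {a : 𝔸} (hf0 : f 0 = 1)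
    (hf : HasDerivAt f a 0) : ∀ᶠ s in 𝓝 0, ‖f s‖ ≤ 1 + (‖a‖ + 1) * ‖s‖ := by
  filter_upwards [hf.isLittleO.bound one_pos] with s hs
  simp only [hf0, sub_zero, one_mul] at hs
  calc ‖f s‖ = ‖1 + s • a + (f s - 1 - s • a)‖ := by congr 1; abel
    _ ≤ ‖(1 : 𝔸)‖ + ‖s • a‖ + ‖f s - 1 - s • a‖ := norm_add₃_le
    _ ≤ 1 + (‖a‖ + 1) * ‖s‖ := by rw [norm_one, norm_smul]; linarith

theorem tendsto_pow_inv_sub_pow_inv_of_hasDerivAt {f g : ℝ → 𝔸} {a : 𝔸} (hf0 : f 0 = 1)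
    (hg0 : g 0 = 1) (hf : HasDerivAt f a 0) (hg : HasDerivAt g a 0) :
    Tendsto (fun k : ℕ => f (k : ℝ)⁻¹ ^ k - g (k : ℝ)⁻¹ ^ k) atTop (𝓝 0) := by
  have hinv : Tendsto (fun k : ℕ => (k : ℝ)⁻¹) atTop (𝓝 0) :=
    tendsto_inv_atTop_zero.comp tendsto_natCast_atTop_atTop
  have hdiff : Tendsto (fun k : ℕ => ‖f (k : ℝ)⁻¹ - g (k : ℝ)⁻¹‖ / (k : ℝ)⁻¹) atTop (𝓝 0) := by
    have h : (fun s => f s - g s) =o[𝓝 0] fun s => s := by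
      simpa [hf0, hg0] using (hf.sub hg).isLittleO
    exact (h.comp_tendsto hinv).norm_left.tendsto_div_nhds_zero
  set C := ‖a‖ + 1
  rw [tendsto_zero_iff_norm_tendsto_zero]
  refine squeeze_zero' (Eventually.of_forall fun _ => norm_nonneg _) ?_ (by
    simpa only [mul_zero] using hdiff.const_mul (Real.exp C))
  filter_upwards [hinv.eventually (eventually_norm_le_one_add_of_hasDerivAt hf0 hf),
    hinv.eventually (eventually_norm_le_one_add_of_hasDerivAt hg0 hg),
    eventually_ge_atTop 1] with k hfk hgk hk
  obtain ⟨m, rfl⟩ : ∃ m, k = m + 1 := ⟨k - 1, by omega⟩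
  set k : ℕ := m + 1
  have hk0 : (0 : ℝ) < k := by positivity
  rw [Real.norm_of_nonneg (inv_nonneg.mpr hk0.le)] at hfk hgk
  set M := 1 + C * (k : ℝ)⁻¹
  have hMpow : M ^ m ≤ Real.exp C := by
    have hM1 : 1 ≤ M := le_add_of_nonneg_right (by positivity)
    calc M ^ m ≤ M ^ k := pow_le_pow_right₀ hM1 m.le_succ
      _ ≤ Real.exp (C * (k : ℝ)⁻¹) ^ k := by
          gcongr; linarith [Real.add_one_le_exp (C * (k : ℝ)⁻¹)]
      _ = Real.exp C := by rw [← Real.exp_nat_mul]; field_simp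
  calc ‖f (k : ℝ)⁻¹ ^ k - g (k : ℝ)⁻¹ ^ k‖
      ≤ k * M ^ m * ‖f (k : ℝ)⁻¹ - g (k : ℝ)⁻¹‖ := by
        exact_mod_cast norm_pow_succ_sub_pow_succ_le hfk hgk m
    _ ≤ Real.exp C * (‖f (k : ℝ)⁻¹ - g (k : ℝ)⁻¹‖ / (k : ℝ)⁻¹) := by
        rw [div_inv_eq_mul, mul_comm _ (k : ℝ), ← mul_assoc, mul_comm _ (k : ℝ)]
        gcongr

open NormedSpace in
theorem tendsto_exp_mul_exp_pow [CompleteSpace 𝔸] (P Q : 𝔸) :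
    Tendsto (fun k : ℕ => (exp ((k : ℝ)⁻¹ • P) * exp ((k : ℝ)⁻¹ • Q)) ^ k) atTop
      (𝓝 (exp (P + Q))) := by
  let : NormedAlgebra ℚ 𝔸 := NormedAlgebra.restrictScalars ℚ ℝ 𝔸
  have hf : HasDerivAt (fun s : ℝ => exp (s • P) * exp (s • Q)) (P + Q) 0 := by
    simpa using
      (hasDerivAt_exp_smul_const' P (0 : ℝ)).fun_mul (hasDerivAt_exp_smul_const' Q (0 : ℝ))
  have hg : HasDerivAt (fun s : ℝ => exp (s • (P + Q))) (P + Q) 0 := by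
    simpa using hasDerivAt_exp_smul_const' (P + Q) (0 : ℝ)
  have h := tendsto_pow_inv_sub_pow_inv_of_hasDerivAt (by simp) (by simp) hf hg
  rw [← tendsto_sub_nhds_zero_iff]
  refine h.congr' ?_
  filter_upwards [eventually_ne_atTop 0] with k hk
  rw [← NormedSpace.exp_nsmul, ← Nat.cast_smul_eq_nsmul ℝ, smul_smul,
    mul_inv_cancel₀ (by exact_mod_cast hk), one_smul]

end LieProduct

theorem tendsto_mexp_mul_mexp_pow {n : ℕ} (P Q : Mat n) :
    Tendsto (fun k : ℕ => (mexp ((k : ℝ)⁻¹ • P) * mexp ((k : ℝ)⁻¹ • Q)) ^ k) atTop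
      (𝓝 (mexp (P + Q))) := by
  rcases isEmpty_or_nonempty (Fin n) with hn | hn
  · exact tendsto_const_nhds.congr fun _ => Subsingleton.elim _ _
  · -- the `ℓ∞` operator norm induces the product topology of `Mat n`
    let := Matrix.linftyOpNormedRing (n := Fin n) (α := ℝ)
    let := Matrix.linftyOpNormedAlgebra (n := Fin n) (R := ℝ) (α := ℝ)
    exact tendsto_exp_mul_exp_pow P Q

theorem tendsto_GL_iff_tendsto_val {n : ℕ} {u : ℕ → GL (Fin n) ℝ} {L : GL (Fin n) ℝ} :
    Tendsto u atTop (𝓝 L) ↔ Tendsto (fun k => (u k : Mat n)) atTop (𝓝 (L : Mat n)) := by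
  let := Matrix.linftyOpNormedRing (n := Fin n) (α := ℝ)
  let := Matrix.linftyOpNormedAlgebra (n := Fin n) (R := ℝ) (α := ℝ)
  have : CompleteSpace (Mat n) := FiniteDimensional.complete ℝ _
  exact Units.isOpenEmbedding_val.isEmbedding.tendsto_nhds_iff

section LieAlgebra

variable {n : ℕ} {G : Subgroup (GL (Fin n) ℝ)} {X Y : Mat n}

theorem neg_mem_lieAlgOf (hX : X ∈ lieAlgOf G) : -X ∈ lieAlgOf G := fun t => by
  simpa using hX (-t)

theorem transpose_mem_lieAlgOf (hsa : IsSelfAdjointSubgroup G) (hX : X ∈ lieAlgOf G) :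
    Xᵀ ∈ lieAlgOf G := fun t => by
  obtain ⟨g, hg, hgX⟩ := hX t
  obtain ⟨h, hh, hhg⟩ := hsa g hg
  exact ⟨h, hh, by rw [hhg, hgX, mexp, mexp, ← Matrix.exp_transpose, Matrix.transpose_smul]⟩

theorem add_mem_lieAlgOf (hclosed : IsClosed (G : Set (GL (Fin n) ℝ))) (hX : X ∈ lieAlgOf G)
    (hY : Y ∈ lieAlgOf G) : X + Y ∈ lieAlgOf G := by
  intro t
  choose gX hgX hgX' using hX
  choose gY hgY hgY' using hY
  let L : GL (Fin n) ℝ := (Matrix.isUnit_exp (t • (X + Y))).unit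
  refine ⟨L, hclosed.mem_of_tendsto (f := fun k : ℕ => (gX (t / k) * gY (t / k)) ^ k)
    (b := atTop) ?_ (Eventually.of_forall fun k => pow_mem (mul_mem (hgX _) (hgY _)) k),
    by simp [L, mexp]⟩
  rw [tendsto_GL_iff_tendsto_val]
  convert tendsto_mexp_mul_mexp_pow (t • X) (t • Y) using 2 with k
  · simp [hgX', hgY', smul_smul, div_eq_inv_mul]
  · simp [L, mexp]

end LieAlgebra

section CanonicalInner

variable {n : ℕ}

theorem minner_self_eq_zero_iff {A : Mat n} : minner A A = 0 ↔ A = 0 := by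
  simpa [minner, Matrix.conjTranspose_eq_transpose_of_trivial] using
    Matrix.trace_mul_conjTranspose_self_eq_zero_iff (A := A)

theorem minner_sub_transpose_eq_two_mul (X : Mat n) :
    minner (X - Xᵀ) (X - Xᵀ) = 2 * minner X (X - Xᵀ) := by
  have h₁ : (Xᵀ * Xᵀ).trace = (X * X).trace := by
    rw [← Matrix.transpose_mul, Matrix.trace_transpose]
  have h₂ : (Xᵀ * X).trace = (X * Xᵀ).trace := Matrix.trace_mul_comm _ _
  simp only [minner, Matrix.transpose_sub, Matrix.transpose_transpose, Matrix.sub_mul,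
    Matrix.mul_sub, Matrix.trace_sub, h₁, h₂]
  ring

attribute [local instance] Matrix.frobeniusNormedAddCommGroup

theorem mnorm_eq_frobenius_norm (A : Mat n) : mnorm A = ‖A‖ := by
  rw [mnorm, minner, frobenius_norm_def, ← Real.sqrt_eq_rpow]
  simp [Matrix.trace, Matrix.mul_apply, sq]

theorem norm_act_le (X : Mat n) (w : Euc n) : ‖act X w‖ ≤ mnorm X * ‖w‖ := by
  have h := frobenius_norm_mul X (replicateCol Unit w.ofLp)
  rwa [← replicateCol_mulVec, frobenius_norm_replicateCol, frobenius_norm_replicateCol,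
    ← mnorm_eq_frobenius_norm] at h

end CanonicalInner

theorem transpose_eq_of_mem_tildeP {n : ℕ} {G : Subgroup (GL (Fin n) ℝ)} {v : Euc n} {X : Mat n}
    (hclosed : IsClosed (G : Set (GL (Fin n) ℝ))) (hsa : IsSelfAdjointSubgroup G)
    (hX : X ∈ tildeP G v) : Xᵀ = X := by
  have hK : X - Xᵀ ∈ kSet G := by
    refine ⟨?_, by simp⟩
    rw [sub_eq_add_neg]
    exact add_mem_lieAlgOf hclosed hX.1 (neg_mem_lieAlgOf (transpose_mem_lieAlgOf hsa hX.1))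
  have h : minner (X - Xᵀ) (X - Xᵀ) = 0 := by
    rw [minner_sub_transpose_eq_two_mul, hX.2 _ (Or.inl hK), mul_zero]
  exact (sub_eq_zero.mp (minner_self_eq_zero_iff.mp h)).symm

theorem NormedSpace.exp_apply_of_apply_eq_smul {E : Type*} [NormedAddCommGroup E]
    [NormedSpace ℝ E] [CompleteSpace E] {T : E →L[ℝ] E} {w : E} {μ : ℝ} (h : T w = μ • w) :
    exp T w = Real.exp μ • w := by
  have hpow : ∀ m : ℕ, (T ^ m) w = μ ^ m • w := by
    intro m
    induction m with
    | zero => simp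
    | succ m ih =>
      rw [pow_succ]
      change (T ^ m) (T w) = _
      rw [h, map_smul, ih, smul_smul, pow_succ']
  calc exp T w = ∑' m : ℕ, ((m.factorial : ℝ)⁻¹ • T ^ m) w := by
        rw [exp_eq_tsum ℝ]
        exact (ContinuousLinearMap.apply ℝ E w).map_tsum (expSeries_summable' T)
    _ = ∑' m : ℕ, (μ ^ m / m.factorial) • w := by simp [hpow, smul_smul, div_eq_inv_mul]
    _ = Real.exp μ • w := by
        rw [(Real.summable_pow_div_factorial μ).tsum_smul_const, Real.exp_eq_exp_ℝ,
          exp_eq_tsum_div]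

theorem act_mexp_of_act_eq_smul {n : ℕ} {X : Mat n} {w : Euc n} {μ : ℝ} (h : act X w = μ • w) :
    act (mexp X) w = Real.exp μ • w := by
  let := Matrix.linftyOpNormedRing (n := Fin n) (α := ℝ)
  let := Matrix.linftyOpNormedAlgebra (n := Fin n) (R := ℝ) (α := ℝ)
  let : NormedAlgebra ℚ (Mat n) := NormedAlgebra.restrictScalars ℚ ℝ (Mat n)
  have hcont : Continuous (Matrix.toEuclideanCLM (𝕜 := ℝ) (n := Fin n)) :=
    (Matrix.toEuclideanCLM (𝕜 := ℝ) (n := Fin n)).toAlgEquiv.toLinearMap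
      |>.continuous_of_finiteDimensional
  have hmap := NormedSpace.map_exp (Matrix.toEuclideanCLM (𝕜 := ℝ) (n := Fin n)) hcont X
  exact congr($hmap w).trans (NormedSpace.exp_apply_of_apply_eq_smul h)

theorem mul_eq_zero_of_sum_sq_le_sum_sq_exp_mul {ι : Type*} [Fintype ι] {lam c : ι → ℝ}
    (hlam : ∀ i, c i ≠ 0 → lam i ≤ 0)
    (hsum : ∑ i, c i ^ 2 ≤ ∑ i, (Real.exp (lam i) * c i) ^ 2) (i : ι) : lam i * c i = 0 := by
  have hterm : ∀ i, (Real.exp (lam i) * c i) ^ 2 ≤ c i ^ 2 := fun i => by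
    rcases eq_or_ne (c i) 0 with hci | hci
    · simp [hci]
    · rw [mul_pow]
      exact mul_le_of_le_one_left (sq_nonneg _)
        (pow_le_one₀ (Real.exp_pos _).le (Real.exp_le_one_iff.mpr (hlam i hci)))
  have heq := (Finset.sum_eq_sum_iff_of_le fun i _ => hterm i).mp
    (le_antisymm (Finset.sum_le_sum fun i _ => hterm i) hsum) i (Finset.mem_univ i)
  rcases eq_or_ne (c i) 0 with hci | hci
  · rw [hci, mul_zero]
  · rw [mul_pow, mul_eq_right₀ (pow_ne_zero 2 hci),
      pow_eq_one_iff_of_nonneg (Real.exp_pos _).le two_ne_zero, Real.exp_eq_one_iff] at heq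
    rw [heq, zero_mul]

theorem OrthonormalBasis.repr_apply_of_apply_eq_smul {ι E : Type*} [Fintype ι]
    [NormedAddCommGroup E] [InnerProductSpace ℝ E] (B : OrthonormalBasis ι ℝ E) {A : E →ₗ[ℝ] E}
    {α : ι → ℝ} (hA : ∀ i, A (B i) = α i • B i) (x : E) (i : ι) :
    B.repr (A x) i = α i * B.repr x i := by
  classical
  conv_lhs => rw [← B.sum_repr x]
  simp [hA, smul_smul, Pi.single_apply, mul_comm]

section Eigen

variable {n : ℕ} {X : Mat n} {v : Euc n} {μ : ℝ}

theorem hasComp_of_mem_eigenspace {w : Euc n}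
    (hw : w ∈ Module.End.eigenspace (Matrix.toEuclideanLin X) μ) (hwv : inner ℝ w v ≠ 0) :
    hasComp X v μ := by
  intro h0
  have h := Submodule.inner_orthogonalProjectionOnto_eq_of_mem_left ⟨w, hw⟩ v
  rw [h0, inner_zero_right] at h
  exact hwv h.symm

theorem hasEigenvalue_of_hasComp (h : hasComp X v μ) :
    Module.End.HasEigenvalue (Matrix.toEuclideanLin X) μ := by
  rw [Module.End.hasEigenvalue_iff]
  intro hbot
  apply h
  rw [← ZeroMemClass.coe_eq_zero, ← Submodule.mem_bot ℝ, ← hbot]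
  exact Submodule.coe_mem _

theorem abs_le_mnorm_of_hasComp (h : hasComp X v μ) : |μ| ≤ mnorm X := by
  obtain ⟨w, hw⟩ := (hasEigenvalue_of_hasComp h).exists_hasEigenvector
  have hw0 : 0 < ‖w‖ := norm_pos_iff.mpr hw.2
  have h := norm_act_le X w
  rw [act, hw.apply_eq_smul, norm_smul, Real.norm_eq_abs] at h
  exact le_of_mul_le_mul_right h hw0

theorem lambdaOf_le_mnorm : lambdaOf X v ≤ mnorm X :=
  Real.sSup_le (fun _ h => (le_abs_self _).trans (abs_le_mnorm_of_hasComp h)) (Real.sqrt_nonneg _)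

theorem exists_pos_hasComp (hX : Xᵀ = X) (hmin : ‖v‖ ≤ ‖act (mexp X) v‖) (hXv : act X v ≠ 0) :
    ∃ μ, 0 < μ ∧ hasComp X v μ := by
  by_contra! hnonpos
  have hT : (Matrix.toEuclideanLin X).IsSymmetric :=
    Matrix.isSymmetric_toEuclideanLin_iff.mpr (by simpa [Matrix.IsHermitian] using hX)
  set B := hT.eigenvectorBasis finrank_euclideanSpace_fin
  set lam := hT.eigenvalues finrank_euclideanSpace_fin
  have heig : ∀ i, act X (B i) = lam i • B i :=
    hT.apply_eigenvectorBasis finrank_euclideanSpace_fin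
  set c := fun i => B.repr v i
  have hlam : ∀ i, c i ≠ 0 → lam i ≤ 0 := fun i hc => not_lt.mp fun hpos =>
    hnonpos _ hpos (hasComp_of_mem_eigenspace (Module.End.mem_eigenspace_iff.mpr (heig i))
      (by rwa [← B.repr_apply_apply]))
  have hexp : ∀ i, B.repr (act (mexp X) v) i = Real.exp (lam i) * c i :=
    B.repr_apply_of_apply_eq_smul (A := Matrix.toEuclideanLin (mexp X))
      (fun i => act_mexp_of_act_eq_smul (heig i)) v
  have hsum : ∑ i, c i ^ 2 ≤ ∑ i, (Real.exp (lam i) * c i) ^ 2 := by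
    have hnorm : ∀ w, ‖w‖ ^ 2 = ∑ i, B.repr w i ^ 2 := fun w => by
      rw [← B.repr.norm_map, EuclideanSpace.real_norm_sq_eq]
    have h := pow_le_pow_left₀ (norm_nonneg v) hmin 2
    rwa [hnorm, hnorm, Finset.sum_congr rfl fun i _ => congrArg (· ^ 2) (hexp i)] at h
  apply hXv
  apply B.repr.injective
  ext i
  rw [map_zero, act, hT.eigenvectorBasis_apply_self_apply]
  exact mul_eq_zero_of_sum_sq_le_sum_sq_exp_mul hlam hsum i

theorem lambdaOf_pos (hX : Xᵀ = X) (hmin : ‖v‖ ≤ ‖act (mexp X) v‖) (hXv : act X v ≠ 0) :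
    0 < lambdaOf X v := by
  obtain ⟨μ, hμ, h⟩ := exists_pos_hasComp hX hmin hXv
  have hbdd : BddAbove {μ | hasComp X v μ} :=
    ⟨mnorm X, fun _ h => (le_abs_self _).trans (abs_le_mnorm_of_hasComp h)⟩
  exact hμ.trans_le (le_csSup hbdd h)

end Eigen

theorem stmt11_general {n : ℕ} (G : Subgroup (GL (Fin n) ℝ))
    (hclosed : IsClosed (G : Set (GL (Fin n) ℝ)))
    (hsa : IsSelfAdjointSubgroup G)
    (v : Euc n) (hmin : IsMinimalVec G v) :
    ∀ X ∈ tildeP G v, mnorm X = 1 → 0 < lambdaOf X v ∧ lambdaOf X v ≤ 1 := by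
  intro X hX hX1
  have hXv : act X v ≠ 0 := fun h => by
    rw [mnorm, hX.2 X (Or.inr ⟨hX.1, h⟩), Real.sqrt_zero] at hX1
    exact zero_ne_one hX1
  obtain ⟨g, hg, hgX⟩ := hX.1 1
  have hmin' : ‖v‖ ≤ ‖act (mexp X) v‖ := by simpa [hgX] using hmin g hg
  exact ⟨lambdaOf_pos (transpose_eq_of_mem_tildeP hclosed hsa hX) hmin' hXv,
    hX1 ▸ lambdaOf_le_mnorm⟩

/-- Let G be a closed, connected, self-adjoint, noncompact subgroup of GL(n,ℝ)
and v a nonzero minimal vector with G(v) unbounded. Then 0 < λ_X(v) ≤ 1 for every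
X ∈ 𝔓̃_v with |X| = 1. -/
theorem stmt11 {n : ℕ} (G : Subgroup (GL (Fin n) ℝ))
    (hclosed : IsClosed (G : Set (GL (Fin n) ℝ)))
    (hconn : IsConnected (G : Set (GL (Fin n) ℝ)))
    (hsa : IsSelfAdjointSubgroup G)
    (hnc : ¬ IsCompact (G : Set (GL (Fin n) ℝ)))
    (v : Euc n) (hv : v ≠ 0) (hmin : IsMinimalVec G v)
    (hunb : ¬ Bornology.IsBounded (orbitOf G v)) :
    ∀ X ∈ tildeP G v, mnorm X = 1 → 0 < lambdaOf X v ∧ lambdaOf X v ≤ 1 :=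
  stmt11_general G hclosed hsa v hmin

end
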